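/- arXiv:1602.03905 — 2 statements merged into one kernel-verified Lean document; each statement's English description precedes it below -/
import Mathlib

section
/- Let u(N) be the Lie algebra of skew-Hermitian N×N complex matrices equipped with the inner product ⟨X,Y⟩ = N·Re(trace(X*Y)), and let {X_k} be any orthonormal basis of u(N) with respect to this inner product. Then for every N×N complex matrix C, the sum ∑_k X_k C X_k equals −(1/N)·trace(C)·I, where I is the identity matrix. -/
open scoped BigOperators Matrix

/-!
Orthonormality makes `A ↦ -N · tr(Xₖ A)` the coordinate functionals of the basis on skew-Hermitian
matrices (the trace being real there), so `C = -N ∑ₖ tr(Xₖ C) Xₖ` holds for skew-Hermitian `C`,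
hence for all `C` by complex linearity. Any such completeness relation `C = ∑ₖ tr(Xₖ C) Yₖ` forces
`∑ₖ Xₖ C Yₖ = tr(C) · 1`: the `(p, b)` entry of `Xₖ C` is `tr(Xₖ C E_{bp})`.
-/

theorem sum_dual_smul_eq_of_mem_span {R M ι : Type*} [CommSemiring R] [AddCommMonoid M]
    [Module R M] [Fintype ι] [DecidableEq ι] {X : ι → M} {φ : ι → M →ₗ[R] R}
    (hφ : ∀ j k, φ j (X k) = if j = k then 1 else 0) {A : M}
    (hA : A ∈ Submodule.span R (Set.range X)) :
    ∑ k, φ k A • X k = A := by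
  obtain ⟨c, rfl⟩ := (Submodule.mem_span_range_iff_exists_fun R).mp hA
  refine Finset.sum_congr rfl fun k _ => ?_
  simp [hφ]

theorem LinearMap.ext_of_skewAdjoint {A F : Type*} [AddCommGroup A] [Module ℂ A]
    [StarAddMonoid A] [StarModule ℂ A] [AddCommGroup F] [Module ℂ F] {f g : A →ₗ[ℂ] F}
    (h : ∀ a ∈ skewAdjoint A, f a = g a) : f = g := by
  have hself : ∀ b : selfAdjoint A, f b = g b := fun b => by
    have := h (Complex.I • b) (Complex.I_smul_mem_skewAdjoint_iff_isSelfAdjoint.mpr b.2)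
    rwa [map_smul, map_smul, smul_right_inj Complex.I_ne_zero] at this
  ext a
  rw [← realPart_add_I_smul_imaginaryPart a, map_add, map_add, map_smul, map_smul,
    hself, hself]

namespace Matrix

variable {n : Type*} [Fintype n]

theorem sum_mul_mul_eq_trace_smul_one {R ι : Type*} [CommSemiring R] [DecidableEq n]
    [Fintype ι] {X Y : ι → Matrix n n R} (h : ∀ C, ∑ k, (X k * C).trace • Y k = C)
    (C : Matrix n n R) : ∑ k, X k * C * Y k = C.trace • 1 := by
  ext p q
  have hentry : ∀ k b, (X k * C) p b = (X k * (C * single b p 1)).trace := by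
    simp [← Matrix.mul_assoc, trace_mul_single]
  calc (∑ k, X k * C * Y k) p q
      = ∑ b, ∑ k, (X k * (C * single b p 1)).trace * Y k b q := by
        simp only [sum_apply, mul_apply, hentry]
        rw [Finset.sum_comm]
    _ = ∑ b, (C * single b p 1 : Matrix n n R) b q := by
        refine Finset.sum_congr rfl fun b _ => ?_
        conv_rhs => rw [← h (C * single b p 1)]
        simp [sum_apply]
    _ = (C.trace • 1 : Matrix n n R) p q := by
        by_cases hpq : p = q
        · simp [hpq, trace]
        · simp [hpq, mul_single_apply_of_ne (hbj := Ne.symm hpq)]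

theorem ofReal_re_trace_mul_of_skew {X A : Matrix n n ℂ} (hX : Xᴴ = -X) (hA : Aᴴ = -A) :
    ((X * A).trace.re : ℂ) = (X * A).trace := by
  refine Complex.conj_eq_iff_re.mp ?_
  rw [← Complex.star_def, ← trace_conjTranspose, conjTranspose_mul, hX, hA, neg_mul_neg,
    trace_mul_comm]

variable {ι : Type*} [Fintype ι] [DecidableEq ι] {X : ι → Matrix n n ℂ} {s : ℝ}

theorem sum_trace_mul_smul_eq_of_mem_span (hskew : ∀ k, (X k)ᴴ = -(X k))
    (horth : ∀ j k, s * ((X j)ᴴ * X k).trace.re = if j = k then 1 else 0)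
    {A : Matrix n n ℂ} (hA : Aᴴ = -A) (hA_span : A ∈ Submodule.span ℝ (Set.range X)) :
    ∑ k, (X k * A).trace • (-(s : ℂ) • X k) = A := by
  let φ : ι → Matrix n n ℂ →ₗ[ℝ] ℝ := fun k =>
    s • (Complex.reLm ∘ₗ traceLinearMap n ℝ ℂ ∘ₗ LinearMap.mulLeft ℝ (X k)ᴴ)
  have hφ : ∀ k B, φ k B = s * ((X k)ᴴ * B).trace.re := fun k B => by simp [φ]
  conv_rhs => rw [← sum_dual_smul_eq_of_mem_span (φ := φ) (by simpa [hφ] using horth) hA_span]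
  refine Finset.sum_congr rfl fun k _ => ?_
  rw [hφ, ← Complex.coe_smul, smul_smul, hskew, Matrix.neg_mul, trace_neg, Complex.neg_re]
  push_cast
  rw [ofReal_re_trace_mul_of_skew (hskew k) hA]
  ring_nf

theorem sum_trace_mul_smul_eq (hskew : ∀ k, (X k)ᴴ = -(X k))
    (horth : ∀ j k, s * ((X j)ᴴ * X k).trace.re = if j = k then 1 else 0)
    (hspan : ∀ A : Matrix n n ℂ, Aᴴ = -A → A ∈ Submodule.span ℝ (Set.range X))
    (C : Matrix n n ℂ) : ∑ k, (X k * C).trace • (-(s : ℂ) • X k) = C := by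
  let L : Matrix n n ℂ →ₗ[ℂ] Matrix n n ℂ :=
    ∑ k, (traceLinearMap n ℂ ℂ ∘ₗ LinearMap.mulLeft ℂ (X k)).smulRight (-(s : ℂ) • X k)
  have hL : L = LinearMap.id := LinearMap.ext_of_skewAdjoint fun A hA => by
    rw [skewAdjoint.mem_iff, star_eq_conjTranspose] at hA
    simpa [L] using sum_trace_mul_smul_eq_of_mem_span hskew horth hA (hspan A hA)
  simpa [L] using LinearMap.congr_fun hL C

end Matrix

/-- the "magic identity" `∑ₖ Xₖ C Xₖ = -(trace C / N) · I` for an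
orthonormal basis `{Xₖ}` of the Lie algebra `u(N)` of skew-Hermitian matrices,
with inner product `⟨X,Y⟩ = N · Re(trace(X* Y))`. -/
theorem makeenko_migdal_magic_identity
    (N : ℕ) (hN : 0 < N) {ι : Type*} [Fintype ι] [DecidableEq ι]
    (X : ι → Matrix (Fin N) (Fin N) ℂ)
    (hskew : ∀ k, (X k)ᴴ = -(X k))
    (horth : ∀ j k, (N : ℝ) * (((X j)ᴴ * X k).trace).re = if j = k then 1 else 0)
    (hspan : ∀ A : Matrix (Fin N) (Fin N) ℂ, Aᴴ = -A →
      A ∈ Submodule.span ℝ (Set.range X)) :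
    ∀ C : Matrix (Fin N) (Fin N) ℂ,
      ∑ k, X k * C * X k = (-(C.trace / (N : ℂ))) • (1 : Matrix (Fin N) (Fin N) ℂ) := by
  intro C
  have hN' : -(N : ℂ) ≠ 0 := neg_ne_zero.mpr (Nat.cast_ne_zero.mpr hN.ne')
  have h := Matrix.sum_mul_mul_eq_trace_smul_one (Matrix.sum_trace_mul_smul_eq hskew horth hspan) C
  simp only [mul_smul_comm, ← Finset.smul_sum, Complex.ofReal_natCast] at h
  rw [← eq_inv_smul_iff₀ hN'] at h
  rw [h, smul_smul]
  congr 1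
  field_simp
end

section
/- Let u(N) carry the inner product ⟨X,Y⟩ = N·trace(X*Y) and let {X_k} be an orthonormal basis of u(N). For any fixed N×N unitary matrices a₁,a₂,a₃,a₄ and any matrices α,β, the identity ∑_k tr(a₃⁻¹ α a₂ X_k a₄⁻¹ β a₁ X_k) = − tr(a₃⁻¹ α a₂)·tr(a₄⁻¹ β a₁) holds, where tr denotes the normalized trace tr(A) = trace(A)/N. -/
open scoped BigOperators Matrix

/-!
Let `Xₖ` be orthonormal for `⟨X, Y⟩ = c · Re tr(Xᴴ Y)` and span the skew-Hermitian matrices over `ℝ`.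
For skew-Hermitian `X, A` the trace `tr(X A)` is real, so the orthonormal expansion
`A = ∑ₖ c Re tr(Xₖᴴ A) Xₖ` reads `c ∑ₖ tr(Xₖ A) Xₖ = -A`. Both sides are `ℂ`-linear in `A` and every
matrix is `A + i B` with `A, B` skew-Hermitian, so this completeness relation holds for all
matrices; at a matrix unit it says `c ∑ₖ (Xₖ)_{pq} (Xₖ)_{rs} = -δ_{qr} δ_{ps}`, which contracts to
`c ∑ₖ Xₖ C Xₖ = -tr(C) · 1`.
-/

namespace Matrix

theorem exists_skewHermitian_add_I_smul_skewHermitian {n : Type*} (M : Matrix n n ℂ) :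
    ∃ A B : Matrix n n ℂ, Aᴴ = -A ∧ Bᴴ = -B ∧ M = A + Complex.I • B := by
  refine ⟨(1 / 2 : ℂ) • (M - Mᴴ), (-Complex.I / 2) • (M + Mᴴ), ?_, ?_, ?_⟩
  · simp [conjTranspose_smul, ← smul_neg]
  · simp only [conjTranspose_smul, conjTranspose_add, conjTranspose_conjTranspose, star_div₀,
      star_neg, Complex.star_def, Complex.conj_I, map_ofNat]
    module
  · match_scalars <;> linear_combination (1 / 2 : ℂ) * Complex.I_sq

variable {n ι : Type*} [Fintype n] [Fintype ι]

theorem star_trace_mul_of_skewHermitian {X A : Matrix n n ℂ} (hX : Xᴴ = -X) (hA : Aᴴ = -A) :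
    star (X * A).trace = (X * A).trace := by
  rw [← trace_conjTranspose, conjTranspose_mul, hX, hA, neg_mul_neg, trace_mul_comm]

theorem re_trace_conjTranspose_mul_of_skewHermitian {X A : Matrix n n ℂ} (hX : Xᴴ = -X)
    (hA : Aᴴ = -A) : ((Xᴴ * A).trace.re : ℂ) = -(X * A).trace := by
  rw [hX, neg_mul, trace_neg, Complex.neg_re, Complex.ofReal_neg,
    Complex.conj_eq_iff_re.mp (star_trace_mul_of_skewHermitian hX hA)]

variable [DecidableEq ι] (c : ℝ) (X : ι → Matrix n n ℂ)

theorem eq_sum_smul_of_mem_span_of_orthonormal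
    (horth : ∀ j k, c * ((X j)ᴴ * X k).trace.re = if j = k then 1 else 0)
    {A : Matrix n n ℂ} (hA : A ∈ Submodule.span ℝ (Set.range X)) :
    A = ∑ k, (c * ((X k)ᴴ * A).trace.re) • X k := by
  obtain ⟨a, rfl⟩ := (Submodule.mem_span_range_iff_exists_fun ℝ).mp hA
  congr! 2 with j
  simp only [Matrix.mul_smul, trace_sum, trace_smul, Complex.re_sum, Complex.smul_re,
    smul_eq_mul, Finset.mul_sum, mul_left_comm c, horth]
  simp

theorem smul_sum_trace_mul_smul_of_skewHermitian (hskew : ∀ k, (X k)ᴴ = -(X k))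
    (horth : ∀ j k, c * ((X j)ᴴ * X k).trace.re = if j = k then 1 else 0)
    {A : Matrix n n ℂ} (hA : Aᴴ = -A) (hspan : A ∈ Submodule.span ℝ (Set.range X)) :
    (c : ℂ) • ∑ k, (X k * A).trace • X k = -A := by
  conv_rhs => rw [eq_sum_smul_of_mem_span_of_orthonormal c X horth hspan]
  rw [Finset.smul_sum, ← Finset.sum_neg_distrib]
  refine Finset.sum_congr rfl fun k _ => ?_
  rw [← Complex.coe_smul, Complex.ofReal_mul,
    re_trace_conjTranspose_mul_of_skewHermitian (hskew k) hA, smul_smul, mul_neg, neg_smul,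
    neg_neg]

theorem smul_sum_trace_mul_smul (hskew : ∀ k, (X k)ᴴ = -(X k))
    (horth : ∀ j k, c * ((X j)ᴴ * X k).trace.re = if j = k then 1 else 0)
    (hspan : ∀ A : Matrix n n ℂ, Aᴴ = -A → A ∈ Submodule.span ℝ (Set.range X))
    (M : Matrix n n ℂ) :
    (c : ℂ) • ∑ k, (X k * M).trace • X k = -M := by
  obtain ⟨A, B, hA, hB, rfl⟩ := exists_skewHermitian_add_I_smul_skewHermitian M
  have hA' := smul_sum_trace_mul_smul_of_skewHermitian c X hskew horth hA (hspan A hA)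
  have hB' := smul_sum_trace_mul_smul_of_skewHermitian c X hskew horth hB (hspan B hB)
  simp only [Matrix.mul_add, Matrix.mul_smul, trace_add, trace_smul, add_smul, smul_eq_mul,
    mul_smul, Finset.sum_add_distrib, ← Finset.smul_sum, smul_add]
  rw [smul_comm (c : ℂ) Complex.I, hA', hB', smul_neg, neg_add]

variable [DecidableEq n]

theorem mul_sum_apply_mul_apply (hskew : ∀ k, (X k)ᴴ = -(X k))
    (horth : ∀ j k, c * ((X j)ᴴ * X k).trace.re = if j = k then 1 else 0)
    (hspan : ∀ A : Matrix n n ℂ, Aᴴ = -A → A ∈ Submodule.span ℝ (Set.range X))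
    (p q r s : n) :
    (c : ℂ) * ∑ k, X k p q * X k r s = -single s r 1 p q := by
  have h := congr_fun₂ (smul_sum_trace_mul_smul c X hskew horth hspan (single s r 1)) p q
  simp only [trace_mul_single, MulOpposite.op_one, one_smul, smul_apply, sum_apply, smul_eq_mul,
    neg_apply] at h
  simp only [← h, mul_comm]

theorem smul_sum_mul_mul_self (hskew : ∀ k, (X k)ᴴ = -(X k))
    (horth : ∀ j k, c * ((X j)ᴴ * X k).trace.re = if j = k then 1 else 0)
    (hspan : ∀ A : Matrix n n ℂ, Aᴴ = -A → A ∈ Submodule.span ℝ (Set.range X))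
    (C : Matrix n n ℂ) :
    (c : ℂ) • ∑ k, X k * C * X k = -C.trace • (1 : Matrix n n ℂ) := by
  ext p s
  calc ((c : ℂ) • ∑ k, X k * C * X k) p s
      = ∑ q, ∑ r, C q r * ((c : ℂ) * ∑ k, X k p q * X k r s) := by
        simp only [smul_apply, sum_apply, mul_apply, Finset.sum_mul, Finset.mul_sum, smul_eq_mul]
        rw [Finset.sum_comm]
        conv_rhs => rw [Finset.sum_comm]
        refine Finset.sum_congr rfl fun r _ => ?_
        rw [Finset.sum_comm]
        refine Finset.sum_congr rfl fun k _ => Finset.sum_congr rfl fun q _ => ?_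
        ring
    _ = (-C.trace • (1 : Matrix n n ℂ)) p s := by
        simp only [mul_sum_apply_mul_apply c X hskew horth hspan, single_apply]
        rcases eq_or_ne p s with rfl | hps
        · simp [trace]
        · simp [hps, hps.symm]

theorem mul_sum_trace_mul_mul_mul_self (hskew : ∀ k, (X k)ᴴ = -(X k))
    (horth : ∀ j k, c * ((X j)ᴴ * X k).trace.re = if j = k then 1 else 0)
    (hspan : ∀ A : Matrix n n ℂ, Aᴴ = -A → A ∈ Submodule.span ℝ (Set.range X))
    (B C : Matrix n n ℂ) :
    (c : ℂ) * ∑ k, (B * X k * C * X k).trace = -(B.trace * C.trace) := by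
  calc (c : ℂ) * ∑ k, (B * X k * C * X k).trace
      = (B * ((c : ℂ) • ∑ k, X k * C * X k)).trace := by
        simp only [Matrix.mul_smul, trace_smul, Matrix.mul_sum, trace_sum, mul_assoc, smul_eq_mul]
    _ = -(B.trace * C.trace) := by
        rw [smul_sum_mul_mul_self c X hskew horth hspan, Matrix.mul_smul, trace_smul, mul_one,
          smul_eq_mul, neg_mul, mul_comm]

end Matrix

/-- for an orthonormal basis `{Xₖ}` of `u(N)` (inner product
`⟨X,Y⟩ = N·trace(X*Y)`), unitary `a₁,a₂,a₃,a₄` and matrices `α, β`,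
`∑ₖ tr(a₃⁻¹ α a₂ Xₖ a₄⁻¹ β a₁ Xₖ) = - tr(a₃⁻¹ α a₂) · tr(a₄⁻¹ β a₁)`,
where `tr` is the normalized trace. -/
theorem makeenko_migdal_trace_identity
    (N : ℕ) (hN : 0 < N) {ι : Type*} [Fintype ι] [DecidableEq ι]
    (X : ι → Matrix (Fin N) (Fin N) ℂ)
    (hskew : ∀ k, (X k)ᴴ = -(X k))
    (horth : ∀ j k, (N : ℝ) * (((X j)ᴴ * X k).trace).re = if j = k then 1 else 0)
    (hspan : ∀ A : Matrix (Fin N) (Fin N) ℂ, Aᴴ = -A →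
      A ∈ Submodule.span ℝ (Set.range X))
    (a₁ a₂ a₃ a₄ : Matrix.unitaryGroup (Fin N) ℂ)
    (α β : Matrix (Fin N) (Fin N) ℂ) :
    ∑ k, (((a₃ : Matrix (Fin N) (Fin N) ℂ))⁻¹ * α * (a₂ : Matrix (Fin N) (Fin N) ℂ)
        * X k * ((a₄ : Matrix (Fin N) (Fin N) ℂ))⁻¹ * β
        * (a₁ : Matrix (Fin N) (Fin N) ℂ) * X k).trace / (N : ℂ)
      = -(((((a₃ : Matrix (Fin N) (Fin N) ℂ))⁻¹ * α
            * (a₂ : Matrix (Fin N) (Fin N) ℂ)).trace / (N : ℂ))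
          * ((((a₄ : Matrix (Fin N) (Fin N) ℂ))⁻¹ * β
            * (a₁ : Matrix (Fin N) (Fin N) ℂ)).trace / (N : ℂ))) := by
  have key := Matrix.mul_sum_trace_mul_mul_mul_self (N : ℝ) X hskew horth hspan
    (((a₃ : Matrix (Fin N) (Fin N) ℂ))⁻¹ * α * (a₂ : Matrix (Fin N) (Fin N) ℂ))
    (((a₄ : Matrix (Fin N) (Fin N) ℂ))⁻¹ * β * (a₁ : Matrix (Fin N) (Fin N) ℂ))
  have hN' : (N : ℂ) ≠ 0 := by exact_mod_cast hN.ne'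
  simp only [Complex.ofReal_natCast, Matrix.mul_assoc] at key ⊢
  rw [← Finset.sum_div]
  field_simp
  linear_combination key
end
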